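/- Let O = ∑_P α_P P be an n-qubit observable and 𝒟 a distribution over n-qubit states invariant under single-qubit Hadamard and phase gates on each qubit. Then for any Pauli string P, E_{ρ∼𝒟}[Tr(Oρ)·Tr(Pρ)] = (2/3)^{|P|} · α_P · E_{ρ∼𝒟}[γ*(ρ_{dom(P)})], where γ*(σ) = 2^{-|dom(P)|} ∑_{Q∈{X,Y,Z}^⊗|dom(P)|} Tr(Qσ)². -/

import Mathlib

/-!
Conjugation by `H` and `S` permutes the non-identity Paulis `X, Y, Z` up to sign, and the
products `Z = S²`, `X = H Z H` are again invariances of `𝒟`. For `Q ≠ P` pick a qubit `i` with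
`Qᵢ ≠ Pᵢ`; conjugating qubit `i` by whichever of `X, Z` anticommutes with exactly one of
`Qᵢ, Pᵢ` flips the sign of `E[Tr(Qρ) Tr(Pρ)]`, so it vanishes and only `α_P E[Tr(Pρ)²]`
survives on the left. Since `H` swaps `X, Z` and `S` swaps `X, Y` up to sign, `E[Tr(Qρ)²]`
depends only on `dom Q`, so the `3^{|P|}` terms of `γ*` all equal `E[Tr(Pρ)²]`.
-/

open scoped BigOperators
open Matrix MeasureTheory ComplexOrder

noncomputable instance matrixMeasurableSpace {m n : Type*} :
    MeasurableSpace (Matrix m n ℂ) := MeasurableSpace.pi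

/-- The four single-qubit Pauli matrices `I, X, Y, Z`. -/
noncomputable def pauli : Fin 4 → Matrix (Fin 2) (Fin 2) ℂ
  | 0 => 1
  | 1 => !![0, 1; 1, 0]
  | 2 => !![0, -Complex.I; Complex.I, 0]
  | 3 => !![1, 0; 0, -1]

/-- The `n`-qubit Pauli string `P₁ ⊗ ⋯ ⊗ Pₙ`. -/
noncomputable def pauliString {n : ℕ} (P : Fin n → Fin 4) :
    Matrix (Fin n → Fin 2) (Fin n → Fin 2) ℂ :=
  fun x y => ∏ i, pauli (P i) (x i) (y i)

/-- The support (set of qubits acted on nontrivially) of a Pauli string. -/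
def psupp {n : ℕ} (P : Fin n → Fin 4) : Finset (Fin n) :=
  Finset.univ.filter (fun i => P i ≠ 0)

/-- A single-qubit gate `U` embedded at qubit `i` of an `n`-qubit system. -/
noncomputable def embedAt {n : ℕ} (i : Fin n) (U : Matrix (Fin 2) (Fin 2) ℂ) :
    Matrix (Fin n → Fin 2) (Fin n → Fin 2) ℂ :=
  fun x y => U (x i) (y i) * ∏ j ∈ Finset.univ.erase i, (if x j = y j then 1 else 0)

/-- The Hadamard gate. -/
noncomputable def hadamardGate : Matrix (Fin 2) (Fin 2) ℂ :=
  (Real.sqrt 2 : ℂ)⁻¹ • !![1, 1; 1, -1]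

/-- The phase gate `S`. -/
noncomputable def phaseGate : Matrix (Fin 2) (Fin 2) ℂ :=
  !![1, 0; 0, Complex.I]

/-- The non-identity purity of the reduced state of `ρ` on `dom(P)`, expressed via
full-system traces: `γ*(ρ_{dom P}) = 2^{-|dom P|} ∑_{Q ∈ {X,Y,Z}^{dom P}} Tr(Qρ)²`,
where the sum ranges over Pauli strings `Q` supported exactly on `dom P` with
nontrivial single-qubit factors. -/
noncomputable def nonIdentityPurity {n : ℕ} (P : Fin n → Fin 4)
    (ρ : Matrix (Fin n → Fin 2) (Fin n → Fin 2) ℂ) : ℂ :=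
  (2 ^ (psupp P).card : ℂ)⁻¹ *
    ∑ Q : Fin n → Fin 4, if psupp Q = psupp P then ((pauliString Q * ρ).trace) ^ 2 else 0

open Function

namespace Matrix

variable {ι κ R : Type*} [Fintype ι]

def piKron [CommMonoid R] (A : ι → Matrix κ κ R) : Matrix (ι → κ) (ι → κ) R :=
  of fun x y => ∏ i, A i (x i) (y i)

@[simp]
lemma piKron_apply [CommMonoid R] (A : ι → Matrix κ κ R) (x y : ι → κ) :
    piKron A x y = ∏ i, A i (x i) (y i) := rfl

lemma piKron_mul [DecidableEq ι] [Fintype κ] [CommSemiring R] (A B : ι → Matrix κ κ R) :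
    piKron A * piKron B = piKron (A * B) := by
  ext x y
  simp only [piKron_apply, mul_apply, Pi.mul_apply, Fintype.prod_sum, Finset.prod_mul_distrib]

lemma piKron_conjTranspose [CommSemiring R] [StarRing R] (A : ι → Matrix κ κ R) :
    (piKron A)ᴴ = piKron fun i => (A i)ᴴ := by
  ext x y
  simp [conjTranspose_apply]

lemma piKron_update_smul [DecidableEq ι] [CommSemiring R] (A : ι → Matrix κ κ R) (i : ι) (c : R)
    (B : Matrix κ κ R) : piKron (update A i (c • B)) = c • piKron (update A i B) := by
  ext x y
  simp only [piKron_apply, smul_apply, smul_eq_mul]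
  rw [← Finset.mul_prod_erase _ _ (Finset.mem_univ i),
    ← Finset.mul_prod_erase _ _ (Finset.mem_univ i)]
  simp only [update_self, smul_apply, smul_eq_mul, mul_assoc]
  congr 2
  exact Finset.prod_congr rfl fun j hj => by simp [update_of_ne (Finset.ne_of_mem_erase hj)]

end Matrix

lemma pauliString_eq_piKron {n : ℕ} (P : Fin n → Fin 4) :
    pauliString P = piKron (pauli ∘ P) := rfl

lemma embedAt_eq_piKron {n : ℕ} (i : Fin n) (U : Matrix (Fin 2) (Fin 2) ℂ) :
    embedAt i U = piKron (update (1 : Fin n → Matrix (Fin 2) (Fin 2) ℂ) i U) := by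
  ext x y
  rw [embedAt, piKron_apply, ← Finset.mul_prod_erase _ _ (Finset.mem_univ i), update_self]
  congr 1
  exact Finset.prod_congr rfl fun j hj => by
    simp [update_of_ne (Finset.ne_of_mem_erase hj), one_apply]

lemma embedAt_mul {n : ℕ} (i : Fin n) (U V : Matrix (Fin 2) (Fin 2) ℂ) :
    embedAt i (U * V) = embedAt i U * embedAt i V := by
  rw [embedAt_eq_piKron, embedAt_eq_piKron, embedAt_eq_piKron, piKron_mul, ← update_mul, mul_one]

lemma embedAt_conjTranspose_mul_pauliString_mul {n : ℕ} {i : Fin n}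
    {g : Matrix (Fin 2) (Fin 2) ℂ} {Q : Fin n → Fin 4} {c : ℂ} {b : Fin 4}
    (hg : gᴴ * pauli (Q i) * g = c • pauli b) :
    (embedAt i g)ᴴ * pauliString Q * embedAt i g = c • pauliString (update Q i b) := by
  have hfactors : (fun j => (update (1 : Fin n → Matrix (Fin 2) (Fin 2) ℂ) i g j)ᴴ) * pauli ∘ Q
      * update (1 : Fin n → Matrix (Fin 2) (Fin 2) ℂ) i g = update (pauli ∘ Q) i (c • pauli b) := by
    funext j
    by_cases hj : j = i
    · subst hj; simp [hg]
    · simp [hj]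
  rw [embedAt_eq_piKron, pauliString_eq_piKron, piKron_conjTranspose, piKron_mul, piKron_mul,
    hfactors, piKron_update_smul, pauliString_eq_piKron, comp_update]

def pauliCommSign (k j : Fin 4) : ℤ :=
  if k = 0 ∨ j = 0 ∨ k = j then 1 else -1

lemma pauli_conjTranspose_mul_pauli_mul_pauli (k j : Fin 4) :
    (pauli k)ᴴ * pauli j * pauli k = (pauliCommSign k j : ℂ) • pauli j := by
  fin_cases k <;> fin_cases j <;> ext a b <;> fin_cases a <;> fin_cases b <;>
    simp [pauli, pauliCommSign, mul_apply, Fin.sum_univ_two, conjTranspose_apply]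

lemma pauliCommSign_mul_eq_neg_one_of_ne {a b : Fin 4} (h : a ≠ b) :
    pauliCommSign 1 a * pauliCommSign 1 b = -1 ∨ pauliCommSign 3 a * pauliCommSign 3 b = -1 := by
  revert a b; decide

lemma hadamardGate_conjTranspose_mul_mul (A : Matrix (Fin 2) (Fin 2) ℂ) :
    hadamardGateᴴ * A * hadamardGate = (2 : ℂ)⁻¹ • (!![1, 1; 1, -1] * A * !![1, 1; 1, -1]) := by
  have hsqrt : ((Real.sqrt 2 : ℂ)⁻¹) * (Real.sqrt 2 : ℂ)⁻¹ = 2⁻¹ := by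
    rw [← mul_inv, ← Complex.ofReal_mul, Real.mul_self_sqrt zero_le_two, Complex.ofReal_ofNat]
  have hstar : star ((Real.sqrt 2 : ℂ)⁻¹) = (Real.sqrt 2 : ℂ)⁻¹ := by
    rw [star_inv₀, Complex.star_def, Complex.conj_ofReal]
  have hM : (!![1, 1; 1, -1] : Matrix (Fin 2) (Fin 2) ℂ)ᴴ = !![1, 1; 1, -1] := by
    ext a b; fin_cases a <;> fin_cases b <;> simp
  rw [hadamardGate, conjTranspose_smul, hstar, hM, smul_mul_assoc, smul_mul_assoc, mul_smul_comm,
    smul_smul, hsqrt]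

lemma hadamardGate_conj_pauli_one : hadamardGateᴴ * pauli 1 * hadamardGate = pauli 3 := by
  rw [hadamardGate_conjTranspose_mul_mul]
  simp [pauli, smul_of]
  norm_num

lemma phaseGate_conj_pauli_one : phaseGateᴴ * pauli 1 * phaseGate = (-1 : ℂ) • pauli 2 := by
  ext a b; fin_cases a <;> fin_cases b <;>
    simp [pauli, phaseGate, mul_apply, Fin.sum_univ_two, conjTranspose_apply]

lemma pauli_three_eq : pauli 3 = phaseGate * phaseGate := by
  ext a b; fin_cases a <;> fin_cases b <;> simp [pauli, phaseGate]

lemma pauli_one_eq : pauli 1 = hadamardGate * pauli 3 * hadamardGate := by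
  have hH : hadamardGateᴴ = hadamardGate := by
    ext a b; fin_cases a <;> fin_cases b <;> simp [hadamardGate, conjTranspose_apply]
  nth_rw 1 [← hH]
  rw [hadamardGate_conjTranspose_mul_mul]
  simp [pauli, smul_of]
  norm_num

namespace Matrix.PosSemidef

variable {ι : Type*} {ρ : Matrix ι ι ℂ}

lemma re_apply_self_nonneg (hρ : ρ.PosSemidef) (x : ι) : 0 ≤ (ρ x x).re :=
  (Complex.nonneg_iff.mp hρ.diag_nonneg).1

lemma im_apply_self (hρ : ρ.PosSemidef) (x : ι) : (ρ x x).im = 0 :=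
  (Complex.nonneg_iff.mp hρ.diag_nonneg).2.symm

lemma normSq_apply_le [DecidableEq ι] (hρ : ρ.PosSemidef) (x y : ι) :
    Complex.normSq (ρ x y) ≤ (ρ x x).re * (ρ y y).re := by
  have hdet := (Complex.nonneg_iff.mp (hρ.submatrix ![x, y]).det_nonneg).1
  have hyx : ρ y x = star (ρ x y) := (hρ.isHermitian.apply y x).symm
  simp only [det_fin_two, submatrix_apply, Matrix.cons_val_zero, Matrix.cons_val_one, hyx,
    Complex.star_def, Complex.mul_conj, Complex.sub_re, Complex.mul_re, Complex.ofReal_re,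
    hρ.im_apply_self, mul_zero, sub_zero] at hdet
  linarith

variable [Fintype ι]

lemma re_apply_self_le_one (hρ : ρ.PosSemidef) (htr : ρ.trace = 1) (x : ι) : (ρ x x).re ≤ 1 := by
  have h := Finset.single_le_sum (f := fun z => (ρ z z).re)
    (fun z _ => hρ.re_apply_self_nonneg z) (Finset.mem_univ x)
  rwa [← Complex.re_sum, show ∑ z, ρ z z = ρ.trace from rfl, htr, Complex.one_re] at h

lemma norm_apply_le_one (hρ : ρ.PosSemidef) (htr : ρ.trace = 1) (x y : ι) : ‖ρ x y‖ ≤ 1 := by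
  classical
  rw [← pow_le_one_iff_of_nonneg (norm_nonneg _) two_ne_zero, ← Complex.normSq_eq_norm_sq]
  exact (hρ.normSq_apply_le x y).trans (mul_le_one₀ (hρ.re_apply_self_le_one htr x)
    (hρ.re_apply_self_nonneg y) (hρ.re_apply_self_le_one htr y))

lemma norm_trace_mul_le (hρ : ρ.PosSemidef) (htr : ρ.trace = 1) (A : Matrix ι ι ℂ) :
    ‖(A * ρ).trace‖ ≤ ∑ x, ∑ y, ‖A x y‖ := by
  calc ‖(A * ρ).trace‖ = ‖∑ x, ∑ y, A x y * ρ y x‖ := rfl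
    _ ≤ ∑ x, ∑ y, ‖A x y * ρ y x‖ :=
      (norm_sum_le _ _).trans (Finset.sum_le_sum fun x _ => norm_sum_le _ _)
    _ ≤ ∑ x, ∑ y, ‖A x y‖ := by
      gcongr with x _ y
      rw [norm_mul]
      exact mul_le_of_le_one_right (norm_nonneg _) (hρ.norm_apply_le_one htr y x)

end Matrix.PosSemidef

section Correlation

variable {ι : Type*} [Fintype ι]

instance : BorelSpace (Matrix ι ι ℂ) := inferInstanceAs (BorelSpace (ι → ι → ℂ))

def IsConjInvariant (μ : Measure (Matrix ι ι ℂ)) (U : Matrix ι ι ℂ) : Prop :=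
  μ.map (fun ρ => U * ρ * Uᴴ) = μ

lemma measurable_conj (U : Matrix ι ι ℂ) : Measurable fun ρ : Matrix ι ι ℂ => U * ρ * Uᴴ :=
  Continuous.measurable (by fun_prop)

lemma IsConjInvariant.mul {μ : Measure (Matrix ι ι ℂ)} {U V : Matrix ι ι ℂ}
    (hU : IsConjInvariant μ U) (hV : IsConjInvariant μ V) : IsConjInvariant μ (U * V) := by
  have hcomp : (fun ρ => U * V * ρ * (U * V)ᴴ) = (fun ρ => U * ρ * Uᴴ) ∘ fun ρ => V * ρ * Vᴴ := by
    funext ρ; simp [conjTranspose_mul, Matrix.mul_assoc]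
  rw [IsConjInvariant, hcomp, ← Measure.map_map (measurable_conj U) (measurable_conj V), hV, hU]

noncomputable def traceCorrelation (μ : Measure (Matrix ι ι ℂ)) (A B : Matrix ι ι ℂ) : ℂ :=
  ∫ ρ, (A * ρ).trace * (B * ρ).trace ∂μ

lemma trace_mul_conj (A U ρ : Matrix ι ι ℂ) :
    (A * (U * ρ * Uᴴ)).trace = (Uᴴ * A * U * ρ).trace := by
  rw [show A * (U * ρ * Uᴴ) = A * U * ρ * Uᴴ by simp only [Matrix.mul_assoc], trace_mul_comm]
  simp only [Matrix.mul_assoc]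

lemma IsConjInvariant.traceCorrelation_eq {μ : Measure (Matrix ι ι ℂ)} {U : Matrix ι ι ℂ}
    (hU : IsConjInvariant μ U) (A B : Matrix ι ι ℂ) :
    traceCorrelation μ A B = traceCorrelation μ (Uᴴ * A * U) (Uᴴ * B * U) := by
  have hmeas : AEStronglyMeasurable (fun ρ : Matrix ι ι ℂ => (A * ρ).trace * (B * ρ).trace)
      (μ.map fun ρ => U * ρ * Uᴴ) :=
    (Continuous.mul (by fun_prop) (by fun_prop)).aestronglyMeasurable
  rw [traceCorrelation, ← hU, integral_map (measurable_conj U).aemeasurable hmeas, hU]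
  simp only [trace_mul_conj, traceCorrelation]

lemma traceCorrelation_smul (μ : Measure (Matrix ι ι ℂ)) (c d : ℂ) (A B : Matrix ι ι ℂ) :
    traceCorrelation μ (c • A) (d • B) = c * d * traceCorrelation μ A B := by
  simp only [traceCorrelation, Matrix.smul_mul, trace_smul, smul_eq_mul, ← integral_const_mul]
  congr 1; funext ρ; ring

lemma IsConjInvariant.traceCorrelation_eq_zero {μ : Measure (Matrix ι ι ℂ)} {U A B : Matrix ι ι ℂ}
    (hU : IsConjInvariant μ U) {c d : ℂ} (hA : Uᴴ * A * U = c • A) (hB : Uᴴ * B * U = d • B)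
    (hcd : c * d = -1) : traceCorrelation μ A B = 0 := by
  have h := hU.traceCorrelation_eq A B
  rw [hA, hB, traceCorrelation_smul, hcd] at h
  linear_combination h / 2

lemma integrable_trace_mul_mul_trace_mul
    {μ : Measure (Matrix ι ι ℂ)} [IsFiniteMeasure μ]
    (hstate : ∀ᵐ ρ ∂μ, ρ.PosSemidef ∧ ρ.trace = 1) (A B : Matrix ι ι ℂ) :
    Integrable (fun ρ => (A * ρ).trace * (B * ρ).trace) μ := by
  refine Integrable.of_bound (Continuous.mul (by fun_prop) (by fun_prop)).aestronglyMeasurable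
    ((∑ x, ∑ y, ‖A x y‖) * ∑ x, ∑ y, ‖B x y‖) ?_
  filter_upwards [hstate] with ρ ⟨hρ, htr⟩
  rw [norm_mul]
  exact mul_le_mul (hρ.norm_trace_mul_le htr A) (hρ.norm_trace_mul_le htr B) (norm_nonneg _)
    (by positivity)

lemma traceCorrelation_sum_smul_left {μ : Measure (Matrix ι ι ℂ)} [IsFiniteMeasure μ]
    (hstate : ∀ᵐ ρ ∂μ, ρ.PosSemidef ∧ ρ.trace = 1) {κ : Type*}
    (s : Finset κ) (c : κ → ℂ) (A : κ → Matrix ι ι ℂ) (B : Matrix ι ι ℂ) :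
    traceCorrelation μ (∑ k ∈ s, c k • A k) B = ∑ k ∈ s, c k * traceCorrelation μ (A k) B := by
  simp only [traceCorrelation, Finset.sum_mul, trace_sum, Matrix.smul_mul, trace_smul,
    smul_eq_mul, mul_assoc]
  rw [integral_finsetSum _ fun k _ =>
    (integrable_trace_mul_mul_trace_mul hstate (A k) B).const_mul (c k)]
  simp only [integral_const_mul]

end Correlation

lemma Function.apply_eq_of_update_invariant {ι α β : Type*} [Fintype ι] [DecidableEq ι]
    (f : (ι → α) → β) (r : α → α → Prop) (hf : ∀ x i b, r (x i) b → f (update x i b) = f x)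
    {x y : ι → α} (hxy : ∀ i, r (x i) (y i)) : f y = f x := by
  suffices h : ∀ s : Finset ι, f (s.piecewise y x) = f x by simpa using h Finset.univ
  intro s
  induction s using Finset.induction_on with
  | empty => simp
  | insert j s hj ih =>
    have hj' : r (s.piecewise y x j) (y j) := by
      rw [Finset.piecewise_eq_of_notMem _ _ _ hj]; exact hxy j
    rw [Finset.piecewise_insert, hf _ _ _ hj', ih]

lemma psupp_eq_psupp_iff {n : ℕ} {P Q : Fin n → Fin 4} :
    psupp Q = psupp P ↔ ∀ i, (Q i = 0 ↔ P i = 0) := by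
  simp [psupp, Finset.ext_iff, not_iff_not]

lemma card_filter_psupp_eq {n : ℕ} (P : Fin n → Fin 4) :
    (Finset.univ.filter fun Q => psupp Q = psupp P).card = 3 ^ (psupp P).card := by
  have hpi : Finset.univ.filter (fun Q => psupp Q = psupp P)
      = Fintype.piFinset fun i => if P i = 0 then {0} else {0}ᶜ := by
    ext Q
    simp only [Finset.mem_filter, Finset.mem_univ, true_and, psupp_eq_psupp_iff,
      Fintype.mem_piFinset]
    refine forall_congr' fun i => ?_
    split_ifs with h <;> simp [h]
  rw [hpi, Fintype.card_piFinset]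
  simp only [apply_ite Finset.card, Finset.card_singleton, Finset.card_compl, Fintype.card_fin]
  rw [Finset.prod_ite, Finset.prod_const_one, one_mul, Finset.prod_const]
  rfl

section PauliCorrelation

variable {n : ℕ} {μ : Measure (Matrix (Fin n → Fin 2) (Fin n → Fin 2) ℂ)} {i : Fin n}

lemma isConjInvariant_embedAt_pauli_three (hS : IsConjInvariant μ (embedAt i phaseGate)) :
    IsConjInvariant μ (embedAt i (pauli 3)) := by
  rw [pauli_three_eq, embedAt_mul]
  exact hS.mul hS

lemma isConjInvariant_embedAt_pauli_one (hH : IsConjInvariant μ (embedAt i hadamardGate))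
    (hS : IsConjInvariant μ (embedAt i phaseGate)) : IsConjInvariant μ (embedAt i (pauli 1)) := by
  rw [pauli_one_eq, embedAt_mul, embedAt_mul]
  exact (hH.mul (isConjInvariant_embedAt_pauli_three hS)).mul hH

lemma traceCorrelation_pauliString_eq_zero (hH : IsConjInvariant μ (embedAt i hadamardGate))
    (hS : IsConjInvariant μ (embedAt i phaseGate)) {Q R : Fin n → Fin 4} (h : Q i ≠ R i) :
    traceCorrelation μ (pauliString Q) (pauliString R) = 0 := by
  have hconj : ∀ k (Q : Fin n → Fin 4),
      (embedAt i (pauli k))ᴴ * pauliString Q * embedAt i (pauli k)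
        = (pauliCommSign k (Q i) : ℂ) • pauliString Q := fun k Q => by
    simpa using embedAt_conjTranspose_mul_pauliString_mul
      (pauli_conjTranspose_mul_pauli_mul_pauli k (Q i))
  rcases pauliCommSign_mul_eq_neg_one_of_ne h with h1 | h3
  · exact (isConjInvariant_embedAt_pauli_one hH hS).traceCorrelation_eq_zero
      (hconj 1 Q) (hconj 1 R) (by exact_mod_cast h1)
  · exact (isConjInvariant_embedAt_pauli_three hS).traceCorrelation_eq_zero
      (hconj 3 Q) (hconj 3 R) (by exact_mod_cast h3)

lemma traceCorrelation_update_self_eq (hH : IsConjInvariant μ (embedAt i hadamardGate))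
    (hS : IsConjInvariant μ (embedAt i phaseGate)) (Q : Fin n → Fin 4) {a b : Fin 4}
    (ha : a ≠ 0) (hb : b ≠ 0) :
    traceCorrelation μ (pauliString (update Q i a)) (pauliString (update Q i a))
      = traceCorrelation μ (pauliString (update Q i b)) (pauliString (update Q i b)) := by
  set f : Fin 4 → ℂ := fun a =>
    traceCorrelation μ (pauliString (update Q i a)) (pauliString (update Q i a)) with hf
  have h13 : f 1 = f 3 := by
    have h := embedAt_conjTranspose_mul_pauliString_mul (c := 1) (Q := update Q i 1) (i := i)
      (by rw [update_self, hadamardGate_conj_pauli_one, one_smul])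
    rw [update_idem] at h
    simp only [hf]
    rw [hH.traceCorrelation_eq, h, traceCorrelation_smul, one_mul, one_mul]
  have h12 : f 1 = f 2 := by
    have h := embedAt_conjTranspose_mul_pauliString_mul (Q := update Q i 1) (i := i)
      (by rw [update_self, phaseGate_conj_pauli_one])
    rw [update_idem] at h
    simp only [hf]
    rw [hS.traceCorrelation_eq, h, traceCorrelation_smul]
    ring
  have hf1 : ∀ a ≠ 0, f a = f 1 := by
    intro a ha
    fin_cases a <;> simp_all
  exact (hf1 a ha).trans (hf1 b hb).symm

lemma traceCorrelation_self_eq_of_psupp_eq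
    (hH : ∀ i, IsConjInvariant μ (embedAt i hadamardGate))
    (hS : ∀ i, IsConjInvariant μ (embedAt i phaseGate)) {P Q : Fin n → Fin 4}
    (h : psupp Q = psupp P) :
    traceCorrelation μ (pauliString Q) (pauliString Q)
      = traceCorrelation μ (pauliString P) (pauliString P) := by
  refine (Function.apply_eq_of_update_invariant (fun Q => traceCorrelation μ (pauliString Q)
    (pauliString Q)) (fun a b => (a = 0 ↔ b = 0)) ?_ (psupp_eq_psupp_iff.mp h)).symm
  intro x i b hb
  by_cases hx : x i = 0
  · obtain rfl : b = x i := (hb.mp hx).trans hx.symm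
    rw [update_eq_self]
  · have h := traceCorrelation_update_self_eq (hH i) (hS i) x hx (hb.not.mp hx)
    rwa [update_eq_self, eq_comm] at h

lemma integral_nonIdentityPurity [IsFiniteMeasure μ] (hstate : ∀ᵐ ρ ∂μ, ρ.PosSemidef ∧ ρ.trace = 1)
    (P : Fin n → Fin 4) :
    ∫ ρ, nonIdentityPurity P ρ ∂μ = (2 ^ (psupp P).card)⁻¹ *
      ∑ Q ∈ Finset.univ.filter (fun Q => psupp Q = psupp P),
        traceCorrelation μ (pauliString Q) (pauliString Q) := by
  simp only [nonIdentityPurity, ← Finset.sum_filter, sq]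
  rw [integral_const_mul, integral_finsetSum _ fun Q _ =>
    integrable_trace_mul_mul_trace_mul hstate (pauliString Q) (pauliString Q)]
  rfl

end PauliCorrelation

/-- Extracting a Pauli coefficient: for `O = ∑_P α_P P` and a distribution `𝒟` over
`n`-qubit states invariant under single-qubit Hadamard and phase gates on each qubit,
`E_{ρ∼𝒟}[Tr(Oρ) Tr(Pρ)] = (2/3)^{|P|} α_P E_{ρ∼𝒟}[γ*(ρ_{dom P})]`. -/
theorem extract_pauli_coefficient (n : ℕ) (α : (Fin n → Fin 4) → ℝ)
    (O : Matrix (Fin n → Fin 2) (Fin n → Fin 2) ℂ)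
    (hO : O = ∑ P : Fin n → Fin 4, (α P : ℂ) • pauliString P)
    (μ : Measure (Matrix (Fin n → Fin 2) (Fin n → Fin 2) ℂ)) [IsProbabilityMeasure μ]
    (hstate : ∀ᵐ ρ ∂μ, ρ.PosSemidef ∧ ρ.trace = 1)
    (hinvH : ∀ i : Fin n,
      Measure.map (fun ρ => embedAt i hadamardGate * ρ * (embedAt i hadamardGate)ᴴ) μ = μ)
    (hinvS : ∀ i : Fin n,
      Measure.map (fun ρ => embedAt i phaseGate * ρ * (embedAt i phaseGate)ᴴ) μ = μ)
    (P : Fin n → Fin 4) :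
    ∫ ρ, (O * ρ).trace * (pauliString P * ρ).trace ∂μ =
      (2 / 3 : ℂ) ^ (psupp P).card * (α P : ℂ) * ∫ ρ, nonIdentityPurity P ρ ∂μ := by
  have hL : traceCorrelation μ O (pauliString P)
      = α P * traceCorrelation μ (pauliString P) (pauliString P) := by
    rw [hO, traceCorrelation_sum_smul_left hstate,
      Finset.sum_eq_single P (fun Q _ hQP => ?_) (by simp)]
    obtain ⟨i, hi⟩ := Function.ne_iff.mp hQP
    rw [traceCorrelation_pauliString_eq_zero (hinvH i) (hinvS i) hi, mul_zero]
  have hR : ∫ ρ, nonIdentityPurity P ρ ∂μ = (2 ^ (psupp P).card)⁻¹ *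
      (3 ^ (psupp P).card * traceCorrelation μ (pauliString P) (pauliString P)) := by
    rw [integral_nonIdentityPurity hstate, Finset.sum_congr rfl fun Q hQ =>
      traceCorrelation_self_eq_of_psupp_eq hinvH hinvS (Finset.mem_filter.mp hQ).2,
      Finset.sum_const, card_filter_psupp_eq, nsmul_eq_mul]
    push_cast
    rfl
  change traceCorrelation μ O (pauliString P) = _
  rw [hL, hR, div_pow]
  field_simp
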